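/- There exist real constants σ* > 1 and C > 0 such that for every real σ ≥ σ*: f₁(σ) ≠ 0, the value f₁(1−σ)/f₁(σ) is a positive real number, and f₁(1−σ)/f₁(σ) ≤ C·σ^{−2}. In particular f₁(1−σ)/f₁(σ) → 0 as σ → +∞. -/

import Mathlib

open Complex

noncomputable def chi (s : ℂ) : ℂ := s * (s - 1) * completedRiemannZeta₀ s + 1

noncomputable def A : ℂ := Real.pi / 3 - 1

noncomputable def f1 (s : ℂ) : ℂ :=
  (s - 1) * ((s - 1) * (3 * s - 2) * (A * s - A + 1) * chi (s + 1) * chi (3 * s)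
    - (s + 1) * (s - 2) * chi s * chi (3 * s - 1)
    - 2 * (s - 1) * (s - 2) * chi s * chi (3 * s))

noncomputable def f2 (s : ℂ) : ℂ :=
  (s - 2) * ((A * s + 3) * (s - 1) ^ 2 * chi (s + 2)
    - 2 * (s - 1) * (s - 3) * chi (s + 1)
    - (s + 2) * (s - 3) * chi s)

noncomputable def Z1 (s : ℂ) : ℂ := chi (2 * s) * f1 s - chi (2 * s - 1) * f1 (1 - s)

noncomputable def Z2 (s : ℂ) : ℂ := chi (2 * s) * f2 s - chi (2 * s - 1) * f2 (1 - s)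

/-!
For `σ > 2` every value of `χ` entering `f₁(σ)` is a positive real, and so is every value entering
`f₁(1 - σ)` once it is rewritten with `χ(1 - s) = χ(s)`. On `(1, ∞)` we have
`χ(t) = t (t - 1) π^(-t/2) Γ(t/2) ζ(t)`, with `1 ≤ ζ(t) ≤ ζ(2) < 2` for `t ≥ 2`, and log-convexity
of `Γ` gives `Γ(y + 1/2) ≤ Γ(y) √y`; together these give `χ(t) √t ≤ 8 χ(t + 1)` for `t ≥ 2`, so each
unit shift of an argument of `χ` costs a factor of order `σ^(-1/2)`. Relative to
`R = χ(σ + 1) χ(3σ)`, `f₁(σ)` is dominated by its leading term `3Aσ⁴R`, so `f₁(σ) ≥ σ⁴R/20`, while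
the arguments in every term of `f₁(1 - σ)` lie at least two units below `(σ + 1, 3σ)`, and four
units below in its only `σ⁴`-term, so `f₁(1 - σ) ≤ 1500 σ² R`.
-/

open scoped Real

theorem chi_one_sub (s : ℂ) : chi (1 - s) = chi s := by
  rw [chi, chi, completedRiemannZeta₀_one_sub]
  ring

noncomputable def realZeta (t : ℝ) : ℝ := ∑' n : ℕ, 1 / (n : ℝ) ^ t

noncomputable def realChi (t : ℝ) : ℝ :=
  t * (t - 1) * (π ^ (-t / 2) * Real.Gamma (t / 2) * realZeta t)

theorem chi_ofReal {t : ℝ} (ht : 1 < t) : chi t = realChi t := by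
  have ht0 : (t : ℂ) ≠ 0 := ofReal_ne_zero.mpr (by linarith)
  have ht1 : (1 : ℂ) - t ≠ 0 := by
    rw [sub_ne_zero, ne_comm, Ne, ofReal_eq_one]; linarith
  have hΛ : chi t = t * (t - 1) * completedRiemannZeta t := by
    rw [chi, completedRiemannZeta_eq]
    field_simp
    ring
  have hπ : ((π ^ (-t / 2) : ℝ) : ℂ) = (π : ℂ) ^ (-(t : ℂ) / 2) := by
    rw [ofReal_cpow Real.pi_pos.le]; push_cast; ring_nf
  have hΓ : (Real.Gamma (t / 2) : ℂ) = Gamma ((t : ℂ) / 2) := by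
    rw [← Gamma_ofReal]; push_cast; ring_nf
  have hζ : (realZeta t : ℂ) = ∑' n : ℕ, 1 / (n : ℂ) ^ (t : ℂ) := by
    rw [realZeta, ofReal_tsum]
    congr 1 with n
    rw [ofReal_div, ofReal_cpow n.cast_nonneg]
    push_cast; rfl
  rw [hΛ, completedZeta_eq_tsum_of_one_lt_re (by simpa using ht), realChi]
  push_cast [hπ, hΓ, hζ]
  ring

theorem one_le_realZeta {t : ℝ} (ht : 1 < t) : 1 ≤ realZeta t := by
  simpa [realZeta] using
    (Real.summable_one_div_nat_rpow.mpr ht).le_tsum 1 (fun n _ => by positivity)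

theorem realZeta_le_two {t : ℝ} (ht : 2 ≤ t) : realZeta t ≤ 2 := by
  have hmono : realZeta t ≤ realZeta 2 := by
    refine (Real.summable_one_div_nat_rpow.mpr (by linarith)).tsum_le_tsum (fun n => ?_)
      (Real.summable_one_div_nat_rpow.mpr one_lt_two)
    rcases n.eq_zero_or_pos with rfl | hn
    · simp [Real.zero_rpow (by linarith : t ≠ 0)]
    · gcongr
      exact_mod_cast hn
  have hζ2 : realZeta 2 = π ^ 2 / 6 := by
    simpa [realZeta, Real.rpow_two] using hasSum_zeta_two.tsum_eq
  nlinarith [Real.pi_lt_d2, Real.pi_pos]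

theorem Real.Gamma_add_half_le {y : ℝ} (hy : 0 < y) :
    Real.Gamma (y + 1 / 2) ≤ Real.Gamma y * √y := by
  have hΓ := Real.Gamma_pos_of_pos hy
  have h := Real.Gamma_mul_add_mul_le_rpow_Gamma_mul_rpow_Gamma hy (by linarith : 0 < y + 1)
    one_half_pos one_half_pos (add_halves 1)
  rw [Real.Gamma_add_one hy.ne', Real.mul_rpow hy.le hΓ.le, mul_left_comm,
    ← Real.rpow_add hΓ, add_halves, Real.rpow_one, ← Real.sqrt_eq_rpow] at h
  rwa [show 1 / 2 * y + 1 / 2 * (y + 1) = y + 1 / 2 by ring, mul_comm] at h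

theorem Real.Gamma_half_mul_sqrt_le {t : ℝ} (ht : 1 ≤ t) :
    Real.Gamma (t / 2) * √t ≤ 2 * Real.Gamma ((t + 1) / 2) := by
  have hsqrt : 0 < √t := Real.sqrt_pos.mpr (by linarith)
  have h := Real.Gamma_add_half_le (y := (t + 1) / 2) (by linarith)
  rw [show (t + 1) / 2 + 1 / 2 = t / 2 + 1 by ring, Real.Gamma_add_one (by positivity)] at h
  rw [← mul_le_mul_iff_of_pos_right hsqrt]
  calc Real.Gamma (t / 2) * √t * √t = 2 * (t / 2 * Real.Gamma (t / 2)) := by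
        rw [mul_assoc, Real.mul_self_sqrt (by linarith)]; ring
    _ ≤ 2 * (Real.Gamma ((t + 1) / 2) * √((t + 1) / 2)) := by gcongr
    _ ≤ 2 * Real.Gamma ((t + 1) / 2) * √t := by
        rw [← mul_assoc]; gcongr; linarith

theorem realChi_pos {t : ℝ} (ht : 1 < t) : 0 < realChi t :=
  mul_pos (mul_pos (by linarith) (by linarith))
    (mul_pos (mul_pos (by positivity) (Real.Gamma_pos_of_pos (by linarith)))
      (by linarith [one_le_realZeta ht]))

theorem realChi_mul_sqrt_le {t : ℝ} (ht : 2 ≤ t) : realChi t * √t ≤ 8 * realChi (t + 1) := by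
  have hπ : π ^ (-t / 2) = √π * π ^ (-(t + 1) / 2) := by
    rw [Real.sqrt_eq_rpow, ← Real.rpow_add Real.pi_pos]; ring_nf
  have hsqrtπ : √π ≤ 2 := Real.sqrt_le_iff.mpr ⟨by norm_num, by nlinarith [Real.pi_lt_d2]⟩
  have hζ := realZeta_le_two ht
  have hζ' := one_le_realZeta (by linarith : 1 < t + 1)
  calc realChi t * √t
      = t * (t - 1) * √π * π ^ (-(t + 1) / 2) * (Real.Gamma (t / 2) * √t) * realZeta t := by
        rw [realChi, hπ]; ring
    _ ≤ t * (t + 1) * 2 * π ^ (-(t + 1) / 2) * (2 * Real.Gamma ((t + 1) / 2)) *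
          (2 * realZeta (t + 1)) := by
        have := Real.Gamma_half_mul_sqrt_le (by linarith : 1 ≤ t)
        have := Real.Gamma_pos_of_pos (by linarith : 0 < t / 2)
        have : 0 ≤ realZeta t := by linarith [one_le_realZeta (by linarith : 1 < t)]
        gcongr
        · linarith
        · linarith
    _ = 8 * realChi (t + 1) := by rw [realChi]; ring_nf

theorem realChi_mul_le {t : ℝ} (ht : 2 ≤ t) : realChi t * t ≤ 64 * realChi (t + 2) := by
  have hpos := realChi_pos (by linarith : 1 < t)
  have hsqrt : t ≤ √t * √(t + 1) := by
    calc t = √t * √t := (Real.mul_self_sqrt (by linarith)).symm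
      _ ≤ √t * √(t + 1) := by gcongr; linarith
  calc realChi t * t ≤ realChi t * √t * √(t + 1) := by rw [mul_assoc]; gcongr
    _ ≤ 8 * realChi (t + 1) * √(t + 1) :=
        mul_le_mul_of_nonneg_right (realChi_mul_sqrt_le ht) (Real.sqrt_nonneg _)
    _ = 8 * (realChi (t + 1) * √(t + 1)) := by ring
    _ ≤ 8 * (8 * realChi (t + 1 + 1)) :=
        mul_le_mul_of_nonneg_left (realChi_mul_sqrt_le (by linarith)) (by norm_num)
    _ = 64 * realChi (t + 2) := by ring_nf

noncomputable def realA : ℝ := π / 3 - 1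

theorem A_eq_ofReal : A = realA := by
  rw [A, realA]; push_cast; rfl

theorem realA_mem_Icc : realA ∈ Set.Icc 0.047 0.05 := by
  constructor <;> · rw [realA]; linarith [Real.pi_gt_d6, Real.pi_lt_d2]

noncomputable def realF1 (σ : ℝ) : ℝ :=
  (σ - 1) * ((σ - 1) * (3 * σ - 2) * (realA * σ - realA + 1) * (realChi (σ + 1) * realChi (3 * σ))
    - (σ + 1) * (σ - 2) * (realChi σ * realChi (3 * σ - 1))
    - 2 * (σ - 1) * (σ - 2) * (realChi σ * realChi (3 * σ)))

noncomputable def realF1OneSub (σ : ℝ) : ℝ :=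
  σ * ((σ - 2) * (σ + 1) * (realChi σ * realChi (3 * σ - 1))
    + 2 * σ * (σ + 1) * (realChi σ * realChi (3 * σ - 2))
    + σ * (3 * σ - 1) * (realA * σ - 1) * (realChi (σ - 1) * realChi (3 * σ - 2)))

theorem f1_ofReal {σ : ℝ} (hσ : 1 < σ) : f1 σ = realF1 σ := by
  rw [realF1]
  push_cast
  rw [← chi_ofReal (by linarith : 1 < σ + 1), ← chi_ofReal (by linarith : 1 < 3 * σ),
    ← chi_ofReal hσ, ← chi_ofReal (by linarith : 1 < 3 * σ - 1), ← A_eq_ofReal, f1]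
  push_cast
  ring

theorem f1_one_sub_ofReal {σ : ℝ} (hσ : 2 < σ) : f1 (1 - σ) = realF1OneSub σ := by
  rw [realF1OneSub]
  push_cast
  rw [← chi_ofReal (by linarith : 1 < σ - 1), ← chi_ofReal (by linarith : 1 < 3 * σ - 2),
    ← chi_ofReal (by linarith : 1 < σ), ← chi_ofReal (by linarith : 1 < 3 * σ - 1),
    ← A_eq_ofReal, f1]
  push_cast
  rw [← chi_one_sub (σ - 1), ← chi_one_sub (3 * σ - 2), ← chi_one_sub σ, ← chi_one_sub (3 * σ - 1)]
  ring_nf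

theorem realChi_products_le {σ : ℝ} (hσ : 100 ≤ σ) :
    σ * (realChi σ * realChi (3 * σ - 1)) ≤ 64 * (realChi (σ + 1) * realChi (3 * σ)) ∧
    σ * (realChi σ * realChi (3 * σ - 2)) ≤ 52 * (realChi (σ + 1) * realChi (3 * σ)) ∧
    σ ^ 2 * (realChi (σ - 1) * realChi (3 * σ - 2)) ≤
      8192 * (realChi (σ + 1) * realChi (3 * σ)) ∧
    10 * (realChi σ * realChi (3 * σ)) ≤ 8 * (realChi (σ + 1) * realChi (3 * σ)) := by
  have hsqrt : 10 ≤ √σ := Real.le_sqrt_of_sq_le (by linarith)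
  have hσσ : √σ * √σ = σ := Real.mul_self_sqrt (by linarith)
  have p0 := realChi_pos (by linarith : 1 < σ)
  have p1 := realChi_pos (by linarith : 1 < σ + 1)
  have p2 := realChi_pos (by linarith : 1 < 3 * σ)
  have q1 := realChi_pos (by linarith : 1 < 3 * σ - 1)
  have q2 := realChi_pos (by linarith : 1 < 3 * σ - 2)
  have c0 : realChi σ * √σ ≤ 8 * realChi (σ + 1) := realChi_mul_sqrt_le (by linarith)
  have c1 : realChi (3 * σ - 1) * √σ ≤ 8 * realChi (3 * σ) := by
    calc realChi (3 * σ - 1) * √σ ≤ realChi (3 * σ - 1) * √(3 * σ - 1) := by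
          gcongr; linarith
      _ ≤ 8 * realChi (3 * σ - 1 + 1) := realChi_mul_sqrt_le (by linarith)
      _ = 8 * realChi (3 * σ) := by ring_nf
  have c2 : realChi (σ - 1) * σ ≤ 128 * realChi (σ + 1) := by
    have := realChi_mul_le (t := σ - 1) (by linarith)
    rw [show σ - 1 + 2 = σ + 1 by ring] at this
    nlinarith
  have c3 : realChi (3 * σ - 2) * σ ≤ 64 * realChi (3 * σ) := by
    have := realChi_mul_le (t := 3 * σ - 2) (by linarith)
    rw [show 3 * σ - 2 + 2 = 3 * σ by ring] at this
    nlinarith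
  refine ⟨?_, ?_, ?_, ?_⟩
  · calc σ * (realChi σ * realChi (3 * σ - 1))
        = (realChi σ * √σ) * (realChi (3 * σ - 1) * √σ) := by
          linear_combination realChi σ * realChi (3 * σ - 1) * hσσ.symm
      _ ≤ (8 * realChi (σ + 1)) * (8 * realChi (3 * σ)) := by gcongr
      _ = 64 * (realChi (σ + 1) * realChi (3 * σ)) := by ring
  · nlinarith [mul_le_mul c0 c3 (by positivity) (by positivity),
      mul_le_mul_of_nonneg_right hsqrt (by positivity : 0 ≤ σ * (realChi σ * realChi (3 * σ - 2)))]
  · nlinarith [mul_le_mul c2 c3 (by positivity) (by positivity)]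
  · nlinarith [mul_le_mul_of_nonneg_right c0 p2.le,
      mul_le_mul_of_nonneg_right hsqrt (by positivity : 0 ≤ realChi σ * realChi (3 * σ))]

theorem realF1OneSub_pos {σ : ℝ} (hσ : 100 ≤ σ) : 0 < realF1OneSub σ := by
  have hAσ : 1 < realA * σ := by nlinarith [realA_mem_Icc.1]
  have := realChi_pos (by linarith : 1 < σ)
  have := realChi_pos (by linarith : 1 < σ - 1)
  have := realChi_pos (by linarith : 1 < 3 * σ - 1)
  have := realChi_pos (by linarith : 1 < 3 * σ - 2)
  have : 0 < σ - 2 := by linarith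
  have : 0 < 3 * σ - 1 := by linarith
  have : 0 < realA * σ - 1 := by linarith
  rw [realF1OneSub]
  positivity

theorem realF1OneSub_le {σ : ℝ} (hσ : 100 ≤ σ) :
    realF1OneSub σ ≤ 1500 * σ ^ 2 * (realChi (σ + 1) * realChi (3 * σ)) := by
  obtain ⟨h1, h2, h3, -⟩ := realChi_products_le hσ
  obtain ⟨hA, hA'⟩ := realA_mem_Icc
  have hR := mul_pos (realChi_pos (by linarith : 1 < σ + 1)) (realChi_pos (by linarith : 1 < 3 * σ))
  have hAσ : 1 ≤ realA * σ := by nlinarith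
  set R := realChi (σ + 1) * realChi (3 * σ)
  calc realF1OneSub σ
      = (σ - 2) * (σ + 1) * (σ * (realChi σ * realChi (3 * σ - 1)))
        + 2 * σ * (σ + 1) * (σ * (realChi σ * realChi (3 * σ - 2)))
        + (3 * σ - 1) * (realA * σ - 1) * (σ ^ 2 * (realChi (σ - 1) * realChi (3 * σ - 2))) := by
        rw [realF1OneSub]; ring
    _ ≤ (σ - 2) * (σ + 1) * (64 * R) + 2 * σ * (σ + 1) * (52 * R)
        + (3 * σ - 1) * (realA * σ - 1) * (8192 * R) := by
        gcongr <;> apply mul_nonneg <;> linarith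
    _ = ((σ - 2) * (σ + 1) * 64 + 2 * σ * (σ + 1) * 52
          + (3 * σ - 1) * (realA * σ - 1) * 8192) * R := by
        ring
    _ ≤ 1500 * σ ^ 2 * R := by
        gcongr
        nlinarith

theorem le_realF1 {σ : ℝ} (hσ : 100 ≤ σ) :
    σ ^ 4 / 20 * (realChi (σ + 1) * realChi (3 * σ)) ≤ realF1 σ := by
  obtain ⟨h1, -, -, h4⟩ := realChi_products_le hσ
  obtain ⟨hA, hA'⟩ := realA_mem_Icc
  have hR := mul_pos (realChi_pos (by linarith : 1 < σ + 1)) (realChi_pos (by linarith : 1 < 3 * σ))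
  have hp1 :=
    mul_pos (realChi_pos (by linarith : 1 < σ)) (realChi_pos (by linarith : 1 < 3 * σ - 1))
  set R := realChi (σ + 1) * realChi (3 * σ)
  have hB : 0.047 * σ ≤ realA * σ - realA + 1 := by nlinarith
  have hC : 2.95 * σ ^ 2 ≤ (σ - 1) * (3 * σ - 2) := by nlinarith
  have hCB : 0.13865 * σ ^ 3 ≤ (σ - 1) * (3 * σ - 2) * (realA * σ - realA + 1) := by
    nlinarith [mul_le_mul hC hB (by positivity) (by nlinarith)]
  calc σ ^ 4 / 20 * R
      ≤ (σ - 1) * ((σ - 1) * (3 * σ - 2) * (realA * σ - realA + 1)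
          - 0.64 * (σ + 1) * (σ - 2) - 1.6 * (σ - 1) * (σ - 2)) * R := by
        gcongr
        nlinarith
    _ = (σ - 1) * ((σ - 1) * (3 * σ - 2) * (realA * σ - realA + 1) * R
          - (σ + 1) * (σ - 2) * (0.64 * R) - 2 * (σ - 1) * (σ - 2) * (0.8 * R)) := by
        ring
    _ ≤ realF1 σ := by
        rw [realF1]
        gcongr _ * (_ - _ * ?_ - _ * ?_)
        · linarith
        · nlinarith
        · linarith [mul_le_mul_of_nonneg_right hσ hp1.le]
        · nlinarith
        · linarith

theorem realF1_pos {σ : ℝ} (hσ : 100 ≤ σ) : 0 < realF1 σ := by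
  have hR := mul_pos (realChi_pos (by linarith : 1 < σ + 1)) (realChi_pos (by linarith : 1 < 3 * σ))
  exact lt_of_lt_of_le (by positivity) (le_realF1 hσ)

theorem realF1OneSub_div_realF1_le {σ : ℝ} (hσ : 100 ≤ σ) :
    realF1OneSub σ / realF1 σ ≤ 30000 * σ ^ (-2 : ℤ) := by
  have hR := mul_pos (realChi_pos (by linarith : 1 < σ + 1)) (realChi_pos (by linarith : 1 < 3 * σ))
  have hσ2 : σ ^ (-2 : ℤ) * σ ^ 4 = σ ^ 2 := by
    rw [zpow_neg, zpow_two, ← sq]; field_simp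
  rw [div_le_iff₀ (realF1_pos hσ)]
  calc realF1OneSub σ ≤ 1500 * σ ^ 2 * (realChi (σ + 1) * realChi (3 * σ)) := realF1OneSub_le hσ
    _ = 30000 * σ ^ (-2 : ℤ) * (σ ^ 4 / 20 * (realChi (σ + 1) * realChi (3 * σ))) := by
        rw [← hσ2]; ring
    _ ≤ 30000 * σ ^ (-2 : ℤ) * realF1 σ := by gcongr; exact le_realF1 hσ

theorem f1_one_sub_div_f1_eq {σ : ℝ} (hσ : 2 < σ) :
    f1 (1 - σ) / f1 σ = ↑(realF1OneSub σ / realF1 σ) := by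
  rw [f1_one_sub_ofReal hσ, f1_ofReal (by linarith), ofReal_div]

theorem f1_ratio_decay :
    ∃ σstar C : ℝ, 1 < σstar ∧ 0 < C ∧
      (∀ σ : ℝ, σstar ≤ σ →
        f1 (σ : ℂ) ≠ 0 ∧
        (f1 (1 - (σ : ℂ)) / f1 (σ : ℂ)).im = 0 ∧
        0 < (f1 (1 - (σ : ℂ)) / f1 (σ : ℂ)).re ∧
        (f1 (1 - (σ : ℂ)) / f1 (σ : ℂ)).re ≤ C * σ ^ (-2 : ℤ)) ∧
      Filter.Tendsto (fun σ : ℝ => f1 (1 - (σ : ℂ)) / f1 (σ : ℂ))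
        Filter.atTop (nhds 0) := by
  refine ⟨100, 30000, by norm_num, by norm_num, fun σ hσ => ?_, ?_⟩
  · rw [f1_one_sub_div_f1_eq (by linarith), ofReal_re, ofReal_im, f1_ofReal (by linarith)]
    exact ⟨ofReal_ne_zero.mpr (realF1_pos hσ).ne', rfl,
      div_pos (realF1OneSub_pos hσ) (realF1_pos hσ), realF1OneSub_div_realF1_le hσ⟩
  · have hbound : Filter.Tendsto (fun σ : ℝ => 30000 * σ ^ (-2 : ℤ)) Filter.atTop (nhds 0) := by
      simpa using (tendsto_zpow_atTop_zero (by norm_num : (-2 : ℤ) < 0)).const_mul (30000 : ℝ)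
    refine squeeze_zero_norm' ?_ hbound
    filter_upwards [Filter.eventually_ge_atTop 100] with σ hσ
    rw [f1_one_sub_div_f1_eq (by linarith), norm_real, Real.norm_of_nonneg
      (div_pos (realF1OneSub_pos hσ) (realF1_pos hσ)).le]
    exact realF1OneSub_div_realF1_le hσ
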